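/- Let V be a finite type, r : V → V → Prop a directed graph relation such that (i) every vertex has at most one r-predecessor (for each v, if r u v and r u' v then u = u'), and (ii) there exists h : V → ℝ with h(u) < h(v) whenever r u v. Then the simple graph on V whose adjacency relation is u ∼ v ↔ (r u v ∨ r v u) is acyclic, i.e. a forest. -/

import Mathlib

/-!
Consider a cycle and a vertex `w` of maximal height on it. Its two neighbours on the cycle are
distinct and no higher than `w`, so both cycle edges at `w` are `r`-edges pointing into `w`;
this gives `w` two distinct `r`-predecessors.
-/

namespace SimpleGraph

variable {V α : Type*} [LinearOrder α] {G : SimpleGraph V}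

lemma Walk.IsCycle.exists_two_neighbors_le {u : V} {c : G.Walk u u} (hc : c.IsCycle)
    (h : V → α) : ∃ w a b, a ≠ b ∧ G.Adj a w ∧ G.Adj b w ∧ h a ≤ h w ∧ h b ≤ h w := by
  classical
  obtain ⟨m, hm, hmax⟩ := c.support.toFinset.exists_max_image h ⟨u, by simp⟩
  rw [List.mem_toFinset] at hm
  set c' := c.rotate m hm
  have hc' : c'.IsCycle := hc.rotate hm
  have hle : ∀ w ∈ c'.support, h w ≤ h m := fun w hw ↦
    hmax w (List.mem_toFinset.2 ((c.mem_support_rotate_iff m hm).1 hw))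
  exact ⟨m, c'.snd, c'.penultimate, hc'.snd_ne_penultimate, (c'.adj_snd hc'.not_nil).symm,
    c'.adj_penultimate hc'.not_nil, hle _ (c'.getVert_mem_support _),
    hle _ (c'.getVert_mem_support _)⟩

lemma isAcyclic_of_lower_neighbor_unique (h : V → α)
    (huniq : ∀ w a b, G.Adj a w → G.Adj b w → h a ≤ h w → h b ≤ h w → a = b) :
    G.IsAcyclic := fun _ _ hc ↦ by
  obtain ⟨w, a, b, hab, haw, hbw, ha, hb⟩ := hc.exists_two_neighbors_le h
  exact hab (huniq w a b haw hbw ha hb)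

end SimpleGraph

theorem upward_forest_general (V : Type*) (r : V → V → Prop)
    (hpred : ∀ u u' v : V, r u v → r u' v → u = u')
    (hheight : ∃ h : V → ℝ, ∀ u v : V, r u v → h u < h v)
    (G : SimpleGraph V) (hG : ∀ u v : V, G.Adj u v ↔ (r u v ∨ r v u)) :
    G.IsAcyclic := by
  obtain ⟨h, hup⟩ := hheight
  have hinto : ∀ a w, G.Adj a w → h a ≤ h w → r a w := fun a w haw ha ↦
    ((hG a w).1 haw).resolve_right fun hwa ↦ (hup w a hwa).not_ge ha
  exact SimpleGraph.isAcyclic_of_lower_neighbor_unique h fun w a b haw hbw ha hb ↦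
    hpred a b w (hinto a w haw ha) (hinto b w hbw hb)

/-- Let `r` be a directed graph relation on a finite vertex type `V` such that
every vertex has at most one `r`-predecessor and all `r`-edges point strictly
upwards along some height function `h : V → ℝ`. Then the underlying simple
graph (with adjacency `u ∼ v ↔ r u v ∨ r v u`) is acyclic, i.e. a forest. -/
theorem upward_forest (V : Type*) [Finite V] (r : V → V → Prop)
    (hpred : ∀ u u' v : V, r u v → r u' v → u = u')
    (hheight : ∃ h : V → ℝ, ∀ u v : V, r u v → h u < h v)
    (G : SimpleGraph V) (hG : ∀ u v : V, G.Adj u v ↔ (r u v ∨ r v u)) :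
    G.IsAcyclic :=
  upward_forest_general V r hpred hheight G hG
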